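/- If every coordinate function χ_i (i : Fin n) lies in S(F,f), then S(F,f) equals the span of the coordinate functions (the space of all ZMod 2-linear functionals on Fin n → ZMod 2), and S(F,f) is invariant under the dual action of F̂: for every function g in S(F,f), the composition g ∘ F̂ also lies in S(F,f). In particular S(F,f) is the smallest F̂*-invariant subspace containing all coordinate functions as well as f. -/
import Mathlib


/-- `S(F,f)`: the `ZMod 2`-linear span, inside the space of functions
`(Fin n → ZMod 2) → ZMod 2`, of the set `{f ∘ F^[j] : 0 ≤ j < n}`. -/
def SFf (n : ℕ) (F : (Fin n → ZMod 2) → (Fin n → ZMod 2))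
    (f : (Fin n → ZMod 2) → ZMod 2) :
    Submodule (ZMod 2) ((Fin n → ZMod 2) → ZMod 2) :=
  Submodule.span (ZMod 2)
    {g | ∃ j : ℕ, j < n ∧ g = fun x => f (F^[j] x)}

/-- The map `F̂ : x ↦ (j ↦ f (F^[j] x))`. -/
def Fhat (n : ℕ) (F : (Fin n → ZMod 2) → (Fin n → ZMod 2))
    (f : (Fin n → ZMod 2) → ZMod 2) :
    (Fin n → ZMod 2) → (Fin n → ZMod 2) :=
  fun x => fun j : Fin n => f (F^[(j : ℕ)] x)

/-- If every coordinate function `χ_i` lies in `S(F,f)`, then `S(F,f)`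
equals the span of the coordinate functions, and `S(F,f)` is invariant under the dual
action of `F̂` : for every `g ∈ S(F,f)`, also `g ∘ F̂ ∈ S(F,f)`. In particular `S(F,f)` is
the smallest `F̂*`-invariant subspace containing all coordinate functions as well as `f`. -/
theorem SFf_eq_span_coords_and_invariant (n : ℕ) (hn : 0 < n)
    (F : (Fin n → ZMod 2) → (Fin n → ZMod 2)) (f : (Fin n → ZMod 2) → ZMod 2)
    (hχ : ∀ i : Fin n, (fun x : Fin n → ZMod 2 => x i) ∈ SFf n F f) :
    SFf n F f = Submodule.span (ZMod 2)
      {g : (Fin n → ZMod 2) → ZMod 2 | ∃ i : Fin n, g = fun x => x i} ∧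
    (∀ g ∈ SFf n F f, (g ∘ Fhat n F f) ∈ SFf n F f) ∧
    f ∈ SFf n F f ∧
    (∀ U : Submodule (ZMod 2) ((Fin n → ZMod 2) → ZMod 2),
      (∀ i : Fin n, (fun x : Fin n → ZMod 2 => x i) ∈ U) → f ∈ U →
      (∀ g ∈ U, (g ∘ Fhat n F f) ∈ U) → SFf n F f ≤ U) := by
  classical
  set χ : Fin n → ((Fin n → ZMod 2) → ZMod 2) := fun i => fun x => x i with hχdef
  have hsetC : {g : (Fin n → ZMod 2) → ZMod 2 | ∃ i : Fin n, g = fun x => x i}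
      = Set.range χ := by
    ext g; constructor
    · rintro ⟨i, rfl⟩; exact ⟨i, rfl⟩
    · rintro ⟨i, rfl⟩; exact ⟨i, rfl⟩
  have hsetS : {g : (Fin n → ZMod 2) → ZMod 2 | ∃ j : ℕ, j < n ∧ g = fun x => f (F^[j] x)}
      = Set.range (fun j : Fin n => fun x => f (F^[(j : ℕ)] x)) := by
    ext g; constructor
    · rintro ⟨j, hj, rfl⟩; exact ⟨⟨j, hj⟩, rfl⟩
    · rintro ⟨j, rfl⟩; exact ⟨j, j.isLt, rfl⟩
  have hli : LinearIndependent (ZMod 2) χ := by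
    rw [Fintype.linearIndependent_iff]
    intro c hc i
    have := congrFun hc (Pi.single i 1)
    simpa [χ, Finset.sum_apply, Pi.single_apply] using this
  have hCS : Submodule.span (ZMod 2)
      {g : (Fin n → ZMod 2) → ZMod 2 | ∃ i : Fin n, g = fun x => x i} ≤ SFf n F f := by
    rw [Submodule.span_le]
    rintro g ⟨i, rfl⟩
    exact hχ i
  have hfinC : Module.finrank (ZMod 2) (Submodule.span (ZMod 2)
      {g : (Fin n → ZMod 2) → ZMod 2 | ∃ i : Fin n, g = fun x => x i}) = n := by
    rw [hsetC, finrank_span_eq_card hli, Fintype.card_fin]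
  have hfinS : Module.finrank (ZMod 2) (SFf n F f) ≤ n := by
    rw [SFf, hsetS]
    refine (finrank_span_le_card _).trans ?_
    rw [Set.toFinset_card]
    simpa using Fintype.card_range_le (fun j : Fin n => fun x => f (F^[(j : ℕ)] x))
  have heq : SFf n F f = Submodule.span (ZMod 2)
      {g : (Fin n → ZMod 2) → ZMod 2 | ∃ i : Fin n, g = fun x => x i} :=
    (Submodule.eq_of_le_of_finrank_le hCS (hfinS.trans_eq hfinC.symm)).symm
  refine ⟨heq, ?_, ?_, ?_⟩
  · intro g hg
    rw [heq] at hg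
    induction hg using Submodule.span_induction with
    | mem g hgm =>
        obtain ⟨i, rfl⟩ := hgm
        exact Submodule.subset_span ⟨(i : ℕ), i.isLt, rfl⟩
    | zero =>
        have : (0 : (Fin n → ZMod 2) → ZMod 2) ∘ Fhat n F f = 0 := rfl
        rw [this]
        exact (SFf n F f).zero_mem
    | add g h _ _ hg' hh' =>
        have : (g + h) ∘ Fhat n F f = g ∘ Fhat n F f + h ∘ Fhat n F f := rfl
        rw [this]; exact (SFf n F f).add_mem hg' hh'
    | smul c g _ hg' =>
        have : (c • g) ∘ Fhat n F f = c • (g ∘ Fhat n F f) := rfl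
        rw [this]; exact (SFf n F f).smul_mem c hg'
  · exact Submodule.subset_span ⟨0, hn, rfl⟩
  · intro U hUχ hUf hUinv
    rw [SFf, Submodule.span_le]
    rintro g ⟨j, hj, rfl⟩
    have : (fun x => f (F^[j] x)) = (fun x : Fin n → ZMod 2 => x ⟨j, hj⟩) ∘ Fhat n F f := rfl
    rw [this]
    exact hUinv _ (hUχ ⟨j, hj⟩)
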